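/- (Point symmetries of the Q1 (δ=0) reduced system.) Fix integers n, m and t ∈ ℝ, and let (v, v1, v2) be smooth functions satisfying the Q1 (δ=0) reduced system Σ_Q1(n,m) on an open set D ⊆ ℝ² where α ≠ β, v ≠ v1 and v ≠ v2. Then each of the following triples again satisfies Σ_Q1(n,m) on the appropriately transformed domain: (1) ((α,β) ↦ v(e^{−t}α, e^{−t}β), (α,β) ↦ v1(e^{−t}α, e^{−t}β), (α,β) ↦ v2(e^{−t}α, e^{−t}β)); (2) (v+t, v1+t, v2+t); (3) (e^t·v, e^t·v1, e^t·v2). These are the flows of the symmetry generators z1 = α∂_α + β∂_β, z2 = ∂_v + ∂_{v1} + ∂_{v2}, z3 = v∂_v + v1∂_{v1} + v2∂_{v2}. -/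

import Mathlib

/-- Partial derivative with respect to the first variable. -/
noncomputable def pda (f : ℝ × ℝ → ℝ) (p : ℝ × ℝ) : ℝ :=
  deriv (fun x => f (x, p.2)) p.1

/-- Partial derivative with respect to the second variable. -/
noncomputable def pdb (f : ℝ × ℝ → ℝ) (p : ℝ × ℝ) : ℝ :=
  deriv (fun y => f (p.1, y)) p.2

/-- The Q1 (δ=0) reduced system Σ_Q1(n,m). -/
def SigmaQ1 (n m : ℤ) (v v1 v2 : ℝ × ℝ → ℝ) (p : ℝ × ℝ) : Prop :=
  pdb v1 p = ((v1 p - v2 p) / (p.1 - p.2)) *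
      (((m : ℝ) * (v p - v1 p) * (v p - v2 p) - p.2 * (v1 p - v2 p) * pdb v p)
        / (v p - v2 p) ^ 2) ∧
  pda v2 p = ((v1 p - v2 p) / (p.1 - p.2)) *
      (((n : ℝ) * (v p - v1 p) * (v p - v2 p) + p.1 * (v1 p - v2 p) * pda v p)
        / (v p - v1 p) ^ 2) ∧
  pdb (pda v) p = (1 / (p.1 - p.2)) *
      (2 * (p.1 / (v p - v1 p) - p.2 / (v p - v2 p)) * pda v p * pdb v p
        + (n : ℝ) * pdb v p - (m : ℝ) * pda v p)

/-- Unconditional chain rule for scaling by a nonzero constant. -/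
lemma deriv_comp_const_mul'' (c : ℝ) (hc : c ≠ 0) (f : ℝ → ℝ) (x : ℝ) :
    deriv (fun y => f (c * y)) x = c * deriv f (c * x) := by
  by_cases hf : DifferentiableAt ℝ f (c * x)
  · have h := hf.hasDerivAt.comp x ((hasDerivAt_id x).const_mul c)
    simpa [Function.comp_def, mul_comm] using h.deriv
  · have h1 : ¬ DifferentiableAt ℝ (fun y => f (c * y)) x := by
      intro h
      apply hf
      have h2 : DifferentiableAt ℝ ((fun y => f (c * y)) ∘ fun z => c⁻¹ * z) (c * x) := by
        apply DifferentiableAt.comp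
        · have hx : c⁻¹ * (c * x) = x := by field_simp
          rw [hx]; exact h
        · exact differentiableAt_id.const_mul _
      have h3 : ((fun y => f (c * y)) ∘ fun z => c⁻¹ * z) = f := by
        funext z; simp [Function.comp, mul_inv_cancel_left₀ hc]
      rwa [h3] at h2
    rw [deriv_zero_of_not_differentiableAt hf, deriv_zero_of_not_differentiableAt h1]
    ring

/-- Point symmetries of the Q1 (δ=0) reduced system: the flows of the generators
z1 = α∂_α + β∂_β, z2 = ∂_v + ∂_{v1} + ∂_{v2}, z3 = v∂_v + v1∂_{v1} + v2∂_{v2}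
map solutions to solutions. -/
theorem point_symmetries_Q1_reduced_system
    (n m : ℤ) (t : ℝ) (v v1 v2 : ℝ × ℝ → ℝ)
    (D : Set (ℝ × ℝ)) (hD : IsOpen D)
    (hαβ : ∀ p ∈ D, p.1 ≠ p.2)
    (hvv1 : ∀ p ∈ D, v p ≠ v1 p) (hvv2 : ∀ p ∈ D, v p ≠ v2 p)
    (hv : ContDiffOn ℝ (⊤ : ℕ∞) v D) (hv1 : ContDiffOn ℝ (⊤ : ℕ∞) v1 D) (hv2 : ContDiffOn ℝ (⊤ : ℕ∞) v2 D)
    (hS : ∀ p ∈ D, SigmaQ1 n m v v1 v2 p) :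
    (∀ p : ℝ × ℝ, (Real.exp (-t) * p.1, Real.exp (-t) * p.2) ∈ D →
      SigmaQ1 n m (fun q => v (Real.exp (-t) * q.1, Real.exp (-t) * q.2))
        (fun q => v1 (Real.exp (-t) * q.1, Real.exp (-t) * q.2))
        (fun q => v2 (Real.exp (-t) * q.1, Real.exp (-t) * q.2)) p) ∧
    (∀ p ∈ D, SigmaQ1 n m (fun q => v q + t) (fun q => v1 q + t) (fun q => v2 q + t) p) ∧
    (∀ p ∈ D, SigmaQ1 n m (fun q => Real.exp t * v q)
      (fun q => Real.exp t * v1 q) (fun q => Real.exp t * v2 q) p) := by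
  refine ⟨?_, ?_, ?_⟩
  · -- scaling symmetry z1
    intro p hp
    set s : ℝ := Real.exp (-t) with hs_def
    have hs : s ≠ 0 := Real.exp_ne_zero _
    have h1 : ∀ f : ℝ × ℝ → ℝ, ∀ r : ℝ × ℝ,
        pda (fun u => f (s * u.1, s * u.2)) r = s * pda f (s * r.1, s * r.2) := by
      intro f r
      simpa [pda] using deriv_comp_const_mul'' s hs (fun x => f (x, s * r.2)) r.1
    have h2 : ∀ f : ℝ × ℝ → ℝ, ∀ r : ℝ × ℝ,
        pdb (fun u => f (s * u.1, s * u.2)) r = s * pdb f (s * r.1, s * r.2) := by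
      intro f r
      simpa [pdb] using deriv_comp_const_mul'' s hs (fun y => f (s * r.1, y)) r.2
    have h3 : pda (fun u => v (s * u.1, s * u.2))
        = fun r => s * pda v (s * r.1, s * r.2) := funext fun r => h1 v r
    have h4 : pdb (pda (fun u => v (s * u.1, s * u.2))) p
        = s * (s * pdb (pda v) (s * p.1, s * p.2)) := by
      rw [h3]
      have h5 := h2 (pda v) p
      simp only [pdb] at h5 ⊢
      rw [deriv_const_mul_field, h5]
    obtain ⟨e1, e2, e3⟩ := hS (s * p.1, s * p.2) hp
    simp only at e1 e2 e3
    have hab : p.1 ≠ p.2 := fun h => hαβ (s * p.1, s * p.2) hp (by simp [h])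
    have hab' : p.1 - p.2 ≠ 0 := sub_ne_zero.mpr hab
    have hab2 : s * p.1 - s * p.2 ≠ 0 := by
      rw [← mul_sub]; exact mul_ne_zero hs hab'
    have hw1 : v (s * p.1, s * p.2) - v1 (s * p.1, s * p.2) ≠ 0 :=
      sub_ne_zero.mpr (hvv1 _ hp)
    have hw2 : v (s * p.1, s * p.2) - v2 (s * p.1, s * p.2) ≠ 0 :=
      sub_ne_zero.mpr (hvv2 _ hp)
    refine ⟨?_, ?_, ?_⟩
    · simp only [h2 v1, h2 v]
      rw [e1]
      field_simp [hab', hab2, hw1, hw2]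
    · simp only [h1 v2, h1 v]
      rw [e2]
      field_simp [hab', hab2, hw1, hw2]
    · simp only [h4, h1 v, h2 v]
      rw [e3]
      field_simp [hab', hab2, hw1, hw2]
  · -- translation symmetry z2
    intro p hp
    obtain ⟨e1, e2, e3⟩ := hS p hp
    have ha : ∀ f : ℝ × ℝ → ℝ, pda (fun u => f u + t) = pda f := by
      intro f; funext r; simp [pda]
    have hb : ∀ f : ℝ × ℝ → ℝ, pdb (fun u => f u + t) = pdb f := by
      intro f; funext r; simp [pdb]
    refine ⟨?_, ?_, ?_⟩
    · simp only [hb v1, hb v, add_sub_add_right_eq_sub]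
      exact e1
    · simp only [ha v2, ha v, add_sub_add_right_eq_sub]
      exact e2
    · simp only [ha v, hb v, add_sub_add_right_eq_sub]
      exact e3
  · -- dilation symmetry z3
    intro p hp
    set c : ℝ := Real.exp t with hc_def
    have hc : c ≠ 0 := Real.exp_ne_zero _
    obtain ⟨e1, e2, e3⟩ := hS p hp
    have hab : p.1 - p.2 ≠ 0 := sub_ne_zero.mpr (hαβ p hp)
    have hw1 : v p - v1 p ≠ 0 := sub_ne_zero.mpr (hvv1 p hp)
    have hw2 : v p - v2 p ≠ 0 := sub_ne_zero.mpr (hvv2 p hp)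
    have hw1' : c * v p - c * v1 p ≠ 0 := by
      intro h; apply hw1; rcases mul_eq_zero.mp (by linear_combination h : c * (v p - v1 p) = 0) with h | h
      · exact (hc h).elim
      · exact h
    have hw2' : c * v p - c * v2 p ≠ 0 := by
      intro h; apply hw2; rcases mul_eq_zero.mp (by linear_combination h : c * (v p - v2 p) = 0) with h | h
      · exact (hc h).elim
      · exact h
    have ha : ∀ f : ℝ × ℝ → ℝ, pda (fun u => c * f u) = fun r => c * pda f r := by
      intro f; funext r; simp [pda, deriv_const_mul_field]
    have hb : ∀ f : ℝ × ℝ → ℝ, pdb (fun u => c * f u) = fun r => c * pdb f r := by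
      intro f; funext r; simp [pdb, deriv_const_mul_field]
    refine ⟨?_, ?_, ?_⟩
    · simp only [hb v1, hb v]
      rw [e1]
      field_simp
    · simp only [ha v2, ha v]
      rw [e2]
      field_simp
    · simp only [ha v, hb v, hb (pda v)]
      rw [e3]
      field_simp
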